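/- For Γ ≥ 0 and ξ > 0, let e(Γ) = 1/(1 + Γ/ξ). Then for every ω > 0, min(R_L, log₂(1 + Γ/ξ)) ≥ −max(−R_L, (ω·e(Γ) − ln ω − 1)/ln 2), with equality when ω = 1/e(Γ). -/
import Mathlib


theorem wmmse_variational_bound (Γ ξ RL : ℝ) (hΓ : 0 ≤ Γ) (hξ : 0 < ξ)
    (e : ℝ) (he : e = 1 / (1 + Γ / ξ)) :
    (∀ ω : ℝ, 0 < ω →
      min RL (Real.logb 2 (1 + Γ / ξ)) ≥
        -max (-RL) ((ω * e - Real.log ω - 1) / Real.log 2)) ∧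
    min RL (Real.logb 2 (1 + Γ / ξ)) =
      -max (-RL) (((1 / e) * e - Real.log (1 / e) - 1) / Real.log 2) := by
  have hden : (0 : ℝ) < 1 + Γ / ξ := by positivity
  have hepos : 0 < e := by rw [he]; positivity
  have hlg2 : (0 : ℝ) < Real.log 2 := Real.log_pos (by norm_num)
  have hloge : Real.log e = -Real.log (1 + Γ / ξ) := by
    rw [he, Real.log_div one_ne_zero (ne_of_gt hden), Real.log_one]; ring
  have hL : Real.logb 2 (1 + Γ / ξ) = Real.log (1 + Γ / ξ) / Real.log 2 := rfl
  have hmin : -max (-RL) (-Real.logb 2 (1 + Γ / ξ)) = min RL (Real.logb 2 (1 + Γ / ξ)) := by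
    rw [max_neg_neg, neg_neg]
  constructor
  · intro ω hω
    have h1 : Real.log (ω * e) ≤ ω * e - 1 :=
      Real.log_le_sub_one_of_pos (by positivity)
    have h2 : Real.log (ω * e) = Real.log ω + Real.log e :=
      Real.log_mul (ne_of_gt hω) (ne_of_gt hepos)
    have hnum : -Real.log (1 + Γ / ξ) ≤ ω * e - Real.log ω - 1 := by
      rw [← hloge]; rw [h2] at h1; linarith
    have hkey : -Real.logb 2 (1 + Γ / ξ) ≤ (ω * e - Real.log ω - 1) / Real.log 2 := by
      rw [hL, ← neg_div]
      exact div_le_div_of_nonneg_right hnum hlg2.le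
    calc -max (-RL) ((ω * e - Real.log ω - 1) / Real.log 2)
        ≤ -max (-RL) (-Real.logb 2 (1 + Γ / ξ)) := by
          exact neg_le_neg (max_le_max le_rfl hkey)
      _ = min RL (Real.logb 2 (1 + Γ / ξ)) := hmin
  · have h1 : (1 / e) * e = 1 := by field_simp
    have h2 : Real.log (1 / e) = -Real.log e := by
      rw [Real.log_div one_ne_zero (ne_of_gt hepos), Real.log_one]; ring
    rw [h1, h2, hloge, neg_neg]
    rw [show (1 - Real.log (1 + Γ / ξ) - 1) / Real.log 2
        = -Real.logb 2 (1 + Γ / ξ) by rw [hL]; ring]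
    exact hmin.symm
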